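/- arXiv:2008.12131 — 3 statements merged into one kernel-verified Lean document; each statement's English description precedes it below -/
import Mathlib

section
/- Let s ≥ 2 be an integer and let T be a finite tree in which every vertex has degree at most s. For every pair of distinct original vertices u, w of T, the sum over all neighbors x of w in V_s(T) of the shortest-path distance in V_s(T) between u and x equals 3s·d_T(u,w) + s − 2, where d_T(u,w) is the shortest-path distance between u and w in T. -/
/-!
Seen from an original vertex `u`, distances in `V_s(T)` are explicit: `3 d` to an original
vertex at tree distance `d`, one more to its pendants, and to the subdivision vertex next to `a`
on the edge `ab` the shorter of the routes through `a` and through `b`. The formula changes by at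
most one along every edge, which bounds distances from below, and tree paths lift to paths of
three times the length, which bounds them from above. Of the `s` neighbours of `w`, the
subdivision vertex on the edge towards `u` (unique, since `T` is a tree) lies at distance
`3 d(u, w) - 1` and all the others at `3 d(u, w) + 1`.
-/

open SimpleGraph Finset

section VicsekDefs

variable {V : Type} [Fintype V] [DecidableEq V]

/-- Vertex type of the Vicsek graph `V_s(T)`: the original vertices of `T`,
one subdivision vertex `(u, v)` for every ordered adjacent pair (the one closer
to `u` on the subdivided edge `uv`), and `s - deg v` pendant vertices attached
to each original vertex `v`. -/
abbrev VicsekVert (s : ℕ) (T : SimpleGraph V) [DecidableRel T.Adj] : Type :=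
  V ⊕ ({p : V × V // T.Adj p.1 p.2} ⊕ (v : V) × Fin (s - T.degree v))

/-- Base relation generating the adjacency of the Vicsek graph. -/
def vicsekRel (s : ℕ) (T : SimpleGraph V) [DecidableRel T.Adj] :
    VicsekVert s T → VicsekVert s T → Bool
  | Sum.inl u, Sum.inr (Sum.inl ⟨(a, _), _⟩) => u == a
  | Sum.inl u, Sum.inr (Sum.inr ⟨v, _⟩) => u == v
  | Sum.inr (Sum.inl ⟨(a, b), _⟩), Sum.inr (Sum.inl ⟨(c, d), _⟩) => a == d && b == c
  | _, _ => false

/-- The Vicsek operation `V_s` applied to a graph `T` whose degrees are at most `s`: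
every edge `uv` of `T` is subdivided by inserting two new vertices (so that `u` and `v`
are joined by a path of length 3) and `s - deg v` new pendant vertices are attached to
each original vertex `v`. -/
def vicsekGraph (s : ℕ) (T : SimpleGraph V) [DecidableRel T.Adj] :
    SimpleGraph (VicsekVert s T) :=
  SimpleGraph.fromRel (fun x y => vicsekRel s T x y = true)

instance (s : ℕ) (T : SimpleGraph V) [DecidableRel T.Adj] :
    DecidableRel (vicsekGraph s T).Adj := fun x y =>
  decidable_of_iff _ (SimpleGraph.fromRel_adj _ x y).symm

end VicsekDefs

/-- The Wiener index of a finite graph: the sum of the shortest-path distances over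
all unordered pairs of distinct vertices. -/
noncomputable def wienerIndex {W : Type} [Fintype W] (G : SimpleGraph W) : ℕ :=
  (∑ u, ∑ v, G.dist u v) / 2

/-- A bundled finite simple graph with decidable equality and adjacency. -/
structure FinSimpleGraph where
  V : Type
  [fintypeV : Fintype V]
  [decEqV : DecidableEq V]
  G : SimpleGraph V
  [decAdj : DecidableRel G.Adj]

attribute [instance] FinSimpleGraph.fintypeV FinSimpleGraph.decEqV FinSimpleGraph.decAdj

/-- One application of the Vicsek operation to a bundled finite graph. -/
def vicsekStep (s : ℕ) (X : FinSimpleGraph) : FinSimpleGraph where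
  V := VicsekVert s X.G
  G := vicsekGraph s X.G

/-- The `t`-fold iterate `V_s^t` of the Vicsek operation, with `V_s^0 (T) = T`. -/
def vicsekIter (s : ℕ) : ℕ → FinSimpleGraph → FinSimpleGraph
  | 0, X => X
  | t + 1, X => vicsekStep s (vicsekIter s t X)

namespace SimpleGraph

variable {α : Type*} {G : SimpleGraph α}

lemma Adj.dist_le_dist_add_one {v w : α} (hadj : G.Adj v w) (u : α) :
    G.dist u w ≤ G.dist u v + 1 := by
  have := hadj.diff_dist_adj (u := u)
  omega

lemma le_add_dist_of_forall_adj {f : α → ℕ} (hf : ∀ x y, G.Adj x y → f y ≤ f x + 1)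
    {a b : α} (hab : G.Reachable a b) : f b ≤ f a + G.dist a b := by
  obtain ⟨p, hp⟩ := hab.exists_walk_length_eq_dist
  rw [← hp]
  clear hp hab
  induction p with
  | nil => simp
  | cons h p ih =>
    have := hf _ _ h
    rw [Walk.length_cons]
    omega

lemma Reachable.exists_adj_dist_add_one_eq {u w : α} (huw : G.Reachable u w) (hne : u ≠ w) :
    ∃ b, G.Adj w b ∧ G.dist u b + 1 = G.dist u w := by
  obtain ⟨p, hp⟩ := huw.symm.exists_walk_length_eq_dist
  cases p with
  | nil => exact absurd rfl hne
  | @cons _ b _ h q =>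
    refine ⟨b, h, le_antisymm ?_ (h.symm.dist_le_dist_add_one u)⟩
    have hub := dist_le q.reverse
    rw [Walk.length_reverse] at hub
    have hwu : G.dist u w = G.dist w u := dist_comm
    rw [hwu, ← hp, Walk.length_cons]
    omega

lemma exists_isPath_concat_of_dist_add_one_eq {u w b : α} (hb : G.Adj b w)
    (hd : G.dist u b + 1 = G.dist u w) : ∃ q : G.Walk u b, (q.concat hb).IsPath := by
  classical
  have hub : G.Reachable u b := (Reachable.of_dist_ne_zero (by omega)).trans hb.symm.reachable
  obtain ⟨q, hq, hlen⟩ := hub.exists_path_of_dist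
  refine ⟨q, hq.concat (fun hw => ?_) hb⟩
  have := dist_le (q.takeUntil w hw)
  have := q.length_takeUntil_le_length hw
  omega

lemma IsAcyclic.eq_of_adj_of_dist_add_one_eq (hG : G.IsAcyclic) {u w b b' : α}
    (hb : G.Adj w b) (hb' : G.Adj w b') (hd : G.dist u b + 1 = G.dist u w)
    (hd' : G.dist u b' + 1 = G.dist u w) : b = b' := by
  obtain ⟨q, hq⟩ := exists_isPath_concat_of_dist_add_one_eq hb.symm hd
  obtain ⟨q', hq'⟩ := exists_isPath_concat_of_dist_add_one_eq hb'.symm hd'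
  have := congrArg Subtype.val ((hG.subsingleton_path u w).elim ⟨_, hq⟩ ⟨_, hq'⟩)
  exact (Walk.concat_inj this).1

lemma IsTree.existsUnique_adj_dist_add_one_eq (hG : G.IsTree) {u w : α} (hne : u ≠ w) :
    ∃! b, G.Adj w b ∧ G.dist u b + 1 = G.dist u w := by
  obtain ⟨b, hb⟩ := (hG.connected u w).exists_adj_dist_add_one_eq hne
  exact ⟨b, hb, fun b' hb' => hG.isAcyclic.eq_of_adj_of_dist_add_one_eq hb'.1 hb.1 hb'.2 hb.2⟩

/-- Seen from `u ≠ w`, exactly one neighbour of `w` lies at distance `dist u w - 1` and all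
the others at distance `dist u w + 1`. -/
lemma IsTree.sum_neighborSet_dist_add {M : Type*} [AddCommMonoid M] [Fintype α]
    [DecidableRel G.Adj] (hG : G.IsTree) {u w : α} (hne : u ≠ w) (f : ℕ → M) :
    ∑ b : G.neighborSet w, f (G.dist u b) + f (G.dist u w + 1) =
      f (G.dist u w - 1) + G.degree w • f (G.dist u w + 1) := by
  classical
  obtain ⟨b₀, ⟨hb₀, hd₀⟩, huniq⟩ := hG.existsUnique_adj_dist_add_one_eq hne
  have hfar : ∀ b ∈ univ.erase (⟨b₀, hb₀⟩ : G.neighborSet w), G.dist u b = G.dist u w + 1 := by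
    intro b hb
    have hne : (b : α) ≠ b₀ := fun h => (mem_erase.1 hb).1 (Subtype.ext h)
    have hnear : G.dist u b + 1 ≠ G.dist u w := fun h => hne (huniq b ⟨b.2, h⟩)
    exact (hG.dist_eq_dist_add_one_of_adj u b.2).resolve_left (hnear ∘ Eq.symm)
  have hdeg : G.degree w = (univ.erase (⟨b₀, hb₀⟩ : G.neighborSet w)).card + 1 := by
    rw [card_erase_of_mem (mem_univ _), card_univ, card_neighborSet_eq_degree,
      Nat.sub_add_cancel (G.degree_pos_iff_exists_adj w |>.2 ⟨b₀, hb₀⟩)]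
  rw [← add_sum_erase _ _ (mem_univ ⟨b₀, hb₀⟩), sum_congr rfl fun b hb => congrArg f (hfar b hb),
    sum_const, hdeg, succ_nsmul, add_assoc, ← hd₀, Nat.add_sub_cancel]

end SimpleGraph

section Vicsek

variable {V : Type} [Fintype V] [DecidableEq V] (s : ℕ) {T : SimpleGraph V} [DecidableRel T.Adj]

lemma vicsekGraph_adj_iff {x y : VicsekVert s T} :
    (vicsekGraph s T).Adj x y ↔ x ≠ y ∧ (vicsekRel s T x y ∨ vicsekRel s T y x) :=
  fromRel_adj _ x y

lemma vicsekGraph_not_adj_inl_inl (a b : V) :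
    ¬ (vicsekGraph s T).Adj (Sum.inl a) (Sum.inl b) := by
  simp [vicsekGraph_adj_iff, vicsekRel]

lemma vicsekGraph_adj_inl_inr_inl {a : V} {p : {p : V × V // T.Adj p.1 p.2}} :
    (vicsekGraph s T).Adj (Sum.inl a) (Sum.inr (Sum.inl p)) ↔ a = p.1.1 := by
  simp [vicsekGraph_adj_iff, vicsekRel]

lemma vicsekGraph_adj_inl_inr_inr {a : V} {q : (v : V) × Fin (s - T.degree v)} :
    (vicsekGraph s T).Adj (Sum.inl a) (Sum.inr (Sum.inr q)) ↔ a = q.1 := by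
  simp [vicsekGraph_adj_iff, vicsekRel]

lemma vicsekGraph_adj_inl_edge {a b : V} (h : T.Adj a b) :
    (vicsekGraph s T).Adj (Sum.inl a) (Sum.inr (Sum.inl ⟨(a, b), h⟩)) :=
  (vicsekGraph_adj_inl_inr_inl s).2 rfl

lemma vicsekGraph_adj_inl_pendant (v : V) (i : Fin (s - T.degree v)) :
    (vicsekGraph s T).Adj (Sum.inl v) (Sum.inr (Sum.inr ⟨v, i⟩)) :=
  (vicsekGraph_adj_inl_inr_inr s).2 rfl

lemma vicsekGraph_adj_edge_swap {a b : V} (h : T.Adj a b) :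
    (vicsekGraph s T).Adj (Sum.inr (Sum.inl ⟨(a, b), h⟩)) (Sum.inr (Sum.inl ⟨(b, a), h.symm⟩)) := by
  simp [vicsekGraph_adj_iff, vicsekRel, h.ne]

lemma vicsekGraph_neighborFinset_inl (w : V) :
    (vicsekGraph s T).neighborFinset (Sum.inl w) =
      (univ.image fun b : T.neighborSet w => Sum.inr (Sum.inl ⟨(w, b), b.2⟩)) ∪
        univ.image fun i : Fin (s - T.degree w) => Sum.inr (Sum.inr ⟨w, i⟩) := by
  ext x
  rcases x with a | ⟨⟨a, b⟩, hab⟩ | ⟨v, i⟩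
  · simp [vicsekGraph_not_adj_inl_inl]
  · simp only [mem_neighborFinset, vicsekGraph_adj_inl_inr_inl, mem_union, mem_image, mem_univ,
      true_and, Sum.inr.injEq, Sum.inl.injEq, reduceCtorEq, exists_false, or_false]
    constructor
    · rintro rfl
      exact ⟨⟨b, hab⟩, rfl⟩
    · rintro ⟨c, hc⟩
      exact congrArg (fun p => p.1.1) hc
  · simp only [mem_neighborFinset, vicsekGraph_adj_inl_inr_inr, mem_union, mem_image, mem_univ,
      true_and, Sum.inr.injEq, reduceCtorEq, exists_false, false_or]
    constructor
    · rintro rfl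
      exact ⟨i, rfl⟩
    · rintro ⟨j, hj⟩
      exact congrArg Sigma.fst hj

lemma vicsekGraph_sum_neighborFinset_inl {M : Type*} [AddCommMonoid M] (w : V)
    (g : VicsekVert s T → M) :
    ∑ x ∈ (vicsekGraph s T).neighborFinset (Sum.inl w), g x =
      ∑ b : T.neighborSet w, g (Sum.inr (Sum.inl ⟨(w, b), b.2⟩)) +
        ∑ i : Fin (s - T.degree w), g (Sum.inr (Sum.inr ⟨w, i⟩)) := by
  rw [vicsekGraph_neighborFinset_inl, sum_union, sum_image, sum_image]
  · intro i _ j _ h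
    simpa using h
  · intro b _ c _ h
    simpa [Subtype.ext_iff] using h
  · simp [Finset.disjoint_left]

lemma exists_vicsekGraph_walk_inl_inl {a b : V} (p : T.Walk a b) :
    ∃ q : (vicsekGraph s T).Walk (Sum.inl a) (Sum.inl b), q.length = 3 * p.length := by
  induction p with
  | nil => exact ⟨Walk.nil, rfl⟩
  | @cons a c _ h _ ih =>
    obtain ⟨q, hq⟩ := ih
    refine ⟨.cons (vicsekGraph_adj_inl_edge s h)
      (.cons (vicsekGraph_adj_edge_swap s h) (.cons (vicsekGraph_adj_inl_edge s h.symm).symm q)), ?_⟩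
    simp only [Walk.length_cons, hq]
    ring

lemma vicsekGraph_dist_inl_inl_le (hT : T.Preconnected) (u v : V) :
    (vicsekGraph s T).dist (Sum.inl u) (Sum.inl v) ≤ 3 * T.dist u v := by
  obtain ⟨p, hp⟩ := (hT u v).exists_walk_length_eq_dist
  obtain ⟨q, hq⟩ := exists_vicsekGraph_walk_inl_inl s p
  exact (dist_le q).trans_eq (by rw [hq, hp])

lemma vicsekGraph_preconnected (hT : T.Preconnected) : (vicsekGraph s T).Preconnected := by
  have inl_reachable (a b : V) : (vicsekGraph s T).Reachable (Sum.inl a) (Sum.inl b) :=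
    let ⟨p⟩ := hT a b
    ⟨(exists_vicsekGraph_walk_inl_inl s p).choose⟩
  have reachable_inl (x : VicsekVert s T) : ∃ a, (vicsekGraph s T).Reachable (Sum.inl a) x := by
    rcases x with a | p | q
    · exact ⟨a, .refl _⟩
    · exact ⟨p.1.1, ((vicsekGraph_adj_inl_inr_inl s).2 rfl).reachable⟩
    · exact ⟨q.1, ((vicsekGraph_adj_inl_inr_inr s).2 rfl).reachable⟩
  intro x y
  obtain ⟨a, ha⟩ := reachable_inl x
  obtain ⟨b, hb⟩ := reachable_inl y
  exact (ha.symm.trans (inl_reachable a b)).trans hb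

noncomputable def vicsekDistFrom (u : V) : VicsekVert s T → ℕ
  | Sum.inl v => 3 * T.dist u v
  | Sum.inr (Sum.inl p) => min (3 * T.dist u p.1.1 + 1) (3 * T.dist u p.1.2 + 2)
  | Sum.inr (Sum.inr q) => 3 * T.dist u q.1 + 1

lemma vicsekDistFrom_le_of_rel (u : V) {x y : VicsekVert s T} (h : vicsekRel s T x y) :
    vicsekDistFrom s u y ≤ vicsekDistFrom s u x + 1 ∧
      vicsekDistFrom s u x ≤ vicsekDistFrom s u y + 1 := by
  rcases x with a | ⟨⟨a, b⟩, hab⟩ | ⟨v, i⟩ <;> rcases y with c | ⟨⟨c, d⟩, hcd⟩ | ⟨w, j⟩ <;>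
    simp only [vicsekRel, beq_iff_eq, Bool.and_eq_true, Bool.false_eq_true] at h
  · subst h
    have := hcd.symm.dist_le_dist_add_one u
    dsimp only [vicsekDistFrom] at this ⊢
    omega
  · subst h
    simp only [vicsekDistFrom]
    omega
  · obtain ⟨rfl, rfl⟩ := h
    simp only [vicsekDistFrom]
    omega

lemma vicsekDistFrom_le_of_adj (u : V) {x y : VicsekVert s T} (h : (vicsekGraph s T).Adj x y) :
    vicsekDistFrom s u y ≤ vicsekDistFrom s u x + 1 := by
  obtain ⟨-, hxy | hyx⟩ := (vicsekGraph_adj_iff s).1 h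
  · exact (vicsekDistFrom_le_of_rel s u hxy).1
  · exact (vicsekDistFrom_le_of_rel s u hyx).2

lemma vicsekGraph_dist_inl (hT : T.Preconnected) (u : V) (x : VicsekVert s T) :
    (vicsekGraph s T).dist (Sum.inl u) x = vicsekDistFrom s u x := by
  refine le_antisymm ?_ ?_
  · rcases x with v | ⟨⟨a, b⟩, hab⟩ | ⟨v, i⟩
    · exact vicsekGraph_dist_inl_inl_le s hT u v
    · have via_a := (vicsekGraph_adj_inl_edge s hab).dist_le_dist_add_one (Sum.inl u)
      have via_b := (vicsekGraph_adj_inl_edge s hab.symm).dist_le_dist_add_one (Sum.inl u)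
      have via_twin := (vicsekGraph_adj_edge_swap s hab.symm).dist_le_dist_add_one (Sum.inl u)
      have := vicsekGraph_dist_inl_inl_le s hT u a
      have := vicsekGraph_dist_inl_inl_le s hT u b
      dsimp only [vicsekDistFrom] at *
      omega
    · have := (vicsekGraph_adj_inl_pendant s v i).dist_le_dist_add_one (Sum.inl u)
      have := vicsekGraph_dist_inl_inl_le s hT u v
      dsimp only [vicsekDistFrom]
      omega
  · simpa [vicsekDistFrom] using le_add_dist_of_forall_adj
      (fun _ _ => vicsekDistFrom_le_of_adj s u) (vicsekGraph_preconnected s hT (Sum.inl u) x)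

end Vicsek

theorem vicsekGraph_sum_dist_to_neighbors_general {V : Type} [Fintype V] [DecidableEq V]
    (s : ℕ) (T : SimpleGraph V) [DecidableRel T.Adj]
    (hT : T.IsTree) (hdeg : ∀ v : V, T.degree v ≤ s) :
    ∀ u w : V, u ≠ w →
      (∑ x ∈ (vicsekGraph s T).neighborFinset (Sum.inl w),
          (vicsekGraph s T).dist (Sum.inl u) x) = 3 * s * T.dist u w + s - 2 := by
  intro u w hne
  have hD : 0 < T.dist u w := hT.connected.pos_dist_of_ne hne
  have hsum := hT.sum_neighborSet_dist_add hne fun d => min (3 * T.dist u w + 1) (3 * d + 2)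
  rw [min_eq_left (by omega), min_eq_right (by omega)] at hsum
  simp only [vicsekGraph_sum_neighborFinset_inl, vicsekGraph_dist_inl s hT.connected.preconnected,
    vicsekDistFrom, sum_const, card_univ, Fintype.card_fin, smul_eq_mul] at hsum ⊢
  obtain ⟨k, rfl⟩ := Nat.exists_eq_add_of_le (hdeg w)
  generalize T.dist u w = D at *
  obtain ⟨D, rfl⟩ := Nat.exists_eq_add_one.2 hD
  rw [Nat.add_sub_cancel_left, Nat.add_sub_cancel] at *
  ring_nf at hsum ⊢
  omega

/-- For distinct original vertices `u, w` of `T`, the sum over the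
neighbors `x` of `w` in `V_s(T)` of the distance from `u` to `x` in `V_s(T)` equals
`3·s·d_T(u,w) + s - 2`. -/
theorem vicsekGraph_sum_dist_to_neighbors {V : Type} [Fintype V] [DecidableEq V]
    (s : ℕ) (hs : 2 ≤ s) (T : SimpleGraph V) [DecidableRel T.Adj]
    (hT : T.IsTree) (hdeg : ∀ v : V, T.degree v ≤ s) :
    ∀ u w : V, u ≠ w →
      (∑ x ∈ (vicsekGraph s T).neighborFinset (Sum.inl w),
          (vicsekGraph s T).dist (Sum.inl u) x) = 3 * s * T.dist u w + s - 2 :=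
  vicsekGraph_sum_dist_to_neighbors_general s T hT hdeg
end

section
/- Let s ≥ 2 be an integer and let T be a finite tree in which every vertex has degree at most s. For every pair of distinct original vertices u, w of T, the sum over all neighbors x of u and all neighbors y of w in V_s(T) of the shortest-path distance in V_s(T) between x and y equals 3s²·d_T(u,w) + 2s(s−2), where d_T(u,w) is the shortest-path distance between u and w in T. -/
open SimpleGraph Finset

/-!
`V_s(T)` is again a tree: it is connected, and counting degrees (`s` at original vertices, `2` at
subdivision vertices, `1` at leaves) gives one edge fewer than vertices. In a tree, all neighbours
of a vertex `c` but exactly one are one step farther than `c` from any target `t ≠ c`, so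
`∑_{x ~ c} d(x, t) = deg c · (d(c, t) + 1) - 2`. Applying this twice, for non-adjacent `u ≠ w`,
`∑_{x ~ u} ∑_{y ~ w} d(x, y) = deg u · deg w · (d(u, w) + 2) - 2 (deg u + deg w)`,
and in `V_s(T)` the degrees are `s` and `d(u, w) = 3 d_T(u, w)`.
-/

namespace SimpleGraph

variable {W : Type} {G : SimpleGraph W}

lemma Reachable.le_dist_add_of_adj_le {x t : W} (f : W → ℕ)
    (hf : ∀ ⦃a b⦄, G.Adj a b → f a ≤ f b + 1) (h : G.Reachable x t) :
    f x ≤ G.dist x t + f t := by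
  obtain ⟨p, hp⟩ := h.exists_walk_length_eq_dist
  rw [← hp]
  clear hp h
  induction p with
  | nil => simp
  | cons hadj p ih =>
    have := hf hadj
    rw [Walk.length_cons]
    omega

lemma card_subtype_adj [Fintype W] [DecidableRel G.Adj] :
    Fintype.card {p : W × W // G.Adj p.1 p.2} = 2 * #G.edgeFinset := by
  rw [← G.dart_card_eq_twice_card_edges]
  exact Fintype.card_congr ⟨fun p => ⟨p.1, p.2⟩, fun d => ⟨d.toProd, d.adj⟩, fun _ => rfl,
    fun _ => rfl⟩

lemma Connected.exists_adj_dist_add_one_eq (hG : G.Connected) {c t : W} (hct : c ≠ t) :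
    ∃ x, G.Adj c x ∧ G.dist x t + 1 = G.dist c t := by
  obtain ⟨p, -, hp⟩ := hG.exists_path_of_dist c t
  cases p with
  | nil => exact absurd rfl hct
  | @cons _ x _ hcx q =>
    refine ⟨x, hcx, le_antisymm ?_ ?_⟩
    · simpa [← hp] using dist_le q
    · have := hG.dist_triangle (u := c) (v := x) (w := t)
      rw [dist_eq_one_iff_adj.2 hcx] at this
      omega

lemma IsTree.eq_of_adj_of_dist_add_one_eq (hG : G.IsTree) {c t x y : W} (hx : G.Adj c x)
    (hy : G.Adj c y) (hxt : G.dist x t + 1 = G.dist c t) (hyt : G.dist y t + 1 = G.dist c t) :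
    x = y := by
  classical
  have geodesic_cons : ∀ z, G.Adj c z → G.dist z t + 1 = G.dist c t →
      ∃ p : G.Walk c t, p.IsPath ∧ p.snd = z := by
    intro z hz hzt
    obtain ⟨q, hq, hql⟩ := hG.connected.exists_path_of_dist z t
    have hc : c ∉ q.support := fun hc => by
      have := (dist_le (q.dropUntil c hc)).trans (q.length_dropUntil_le_length hc)
      omega
    exact ⟨.cons hz q, hq.cons hc, by simp⟩
  obtain ⟨p, hp, rfl⟩ := geodesic_cons x hx hxt
  obtain ⟨p', hp', rfl⟩ := geodesic_cons y hy hyt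
  rw [(hG.existsUnique_path c t).unique hp hp']

lemma IsTree.sum_dist_neighborFinset_add_two {c t : W} (hG : G.IsTree)
    [Fintype (G.neighborSet c)] (hct : c ≠ t) :
    ∑ x ∈ G.neighborFinset c, G.dist x t + 2 = G.degree c * (G.dist c t + 1) := by
  classical
  obtain ⟨x₀, hx₀, hx₀t⟩ := hG.connected.exists_adj_dist_add_one_eq hct
  have hx₀N : x₀ ∈ G.neighborFinset c := (G.mem_neighborFinset c x₀).2 hx₀
  have farther : ∀ x ∈ (G.neighborFinset c).erase x₀, G.dist x t = G.dist c t + 1 := by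
    intro x hx
    obtain ⟨hne, hxN⟩ := Finset.mem_erase.1 hx
    rcases hG.dist_eq_dist_add_one_of_adj t ((G.mem_neighborFinset c x).1 hxN) with h | h
    · exact absurd (hG.eq_of_adj_of_dist_add_one_eq ((G.mem_neighborFinset c x).1 hxN) hx₀
        (by rw [dist_comm, ← h, dist_comm]) hx₀t) hne
    · simpa [dist_comm] using h
  rw [← card_neighborFinset_eq_degree, ← Finset.sum_erase_add _ _ hx₀N,
    Finset.sum_congr rfl farther, add_assoc, ← Finset.card_erase_add_one hx₀N]
  simp only [Finset.sum_const, smul_eq_mul]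
  rw [show G.dist x₀ t + 2 = G.dist c t + 1 by omega]
  ring

lemma IsTree.sum_sum_dist_neighborFinset_add {u w : W} (hG : G.IsTree)
    [Fintype (G.neighborSet u)] [Fintype (G.neighborSet w)] (huw : u ≠ w) (hnadj : ¬ G.Adj u w) :
    ∑ x ∈ G.neighborFinset u, ∑ y ∈ G.neighborFinset w, G.dist x y
        + 2 * (G.degree u + G.degree w) = G.degree u * G.degree w * (G.dist u w + 2) := by
  have inner : ∀ y ∈ G.neighborFinset w,
      ∑ x ∈ G.neighborFinset u, G.dist x y + 2 = G.degree u * (G.dist u y + 1) := by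
    intro y hy
    refine hG.sum_dist_neighborFinset_add_two fun huy => hnadj ?_
    exact huy ▸ ((G.mem_neighborFinset w y).1 hy).symm
  have outer := hG.sum_dist_neighborFinset_add_two (t := u) huw.symm
  have hsum : ∑ y ∈ G.neighborFinset w, (∑ x ∈ G.neighborFinset u, G.dist x y + 2)
      = G.degree u * (∑ y ∈ G.neighborFinset w, G.dist y u + G.degree w) := by
    rw [Finset.sum_congr rfl inner, ← Finset.mul_sum, Finset.sum_add_distrib]
    simp [dist_comm]
  rw [Finset.sum_add_distrib, Finset.sum_const, card_neighborFinset_eq_degree, smul_eq_mul]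
    at hsum
  rw [dist_comm] at outer
  rw [Finset.sum_comm]
  linear_combination hsum + G.degree u * outer

end SimpleGraph

namespace VicsekVert

variable {V : Type} [Fintype V] {s : ℕ} {T : SimpleGraph V} [DecidableRel T.Adj]

def subdiv {a b : V} (h : T.Adj a b) : VicsekVert s T := Sum.inr (Sum.inl ⟨(a, b), h⟩)

def leaf (v : V) (i : Fin (s - T.degree v)) : VicsekVert s T := Sum.inr (Sum.inr ⟨v, i⟩)

end VicsekVert

namespace vicsekGraph

open VicsekVert

variable {V : Type} [Fintype V] [DecidableEq V] {s : ℕ} {T : SimpleGraph V} [DecidableRel T.Adj]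

lemma adj_inl_iff {v : V} {y : VicsekVert s T} :
    (vicsekGraph s T).Adj (Sum.inl v) y ↔
      (∃ b, ∃ h : T.Adj v b, y = subdiv h) ∨ ∃ i, y = leaf v i := by
  rcases y with u | ⟨⟨⟨a, b⟩, h⟩ | ⟨u, i⟩⟩ <;> simp [vicsekGraph, vicsekRel, subdiv, leaf]
  all_goals aesop

lemma adj_subdiv_iff {a b : V} {h : T.Adj a b} {y : VicsekVert s T} :
    (vicsekGraph s T).Adj (subdiv h) y ↔ y = Sum.inl a ∨ y = subdiv h.symm := by
  rcases y with u | ⟨⟨⟨c, d⟩, _⟩ | ⟨u, i⟩⟩ <;> simp [vicsekGraph, vicsekRel, subdiv]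
  all_goals aesop

lemma adj_leaf_iff {v : V} {i : Fin (s - T.degree v)} {y : VicsekVert s T} :
    (vicsekGraph s T).Adj (leaf v i) y ↔ y = Sum.inl v := by
  rcases y with u | ⟨⟨⟨c, d⟩, _⟩ | ⟨u, j⟩⟩ <;> simp [vicsekGraph, vicsekRel, leaf]

lemma adj_inl_subdiv {a b : V} (h : T.Adj a b) :
    (vicsekGraph s T).Adj (Sum.inl a) (subdiv h) :=
  adj_inl_iff.2 (.inl ⟨b, h, rfl⟩)

lemma adj_subdiv_subdiv {a b : V} (h : T.Adj a b) :
    (vicsekGraph s T).Adj (subdiv (s := s) h) (subdiv h.symm) :=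
  adj_subdiv_iff.2 (.inr rfl)

lemma adj_inl_leaf (v : V) (i : Fin (s - T.degree v)) :
    (vicsekGraph s T).Adj (Sum.inl v) (leaf v i) :=
  adj_inl_iff.2 (.inr ⟨i, rfl⟩)

lemma not_adj_inl_inl (u w : V) : ¬ (vicsekGraph s T).Adj (Sum.inl u) (Sum.inl w) := by
  simp [adj_inl_iff, subdiv, leaf]

def liftWalk : {u w : V} → T.Walk u w → (vicsekGraph s T).Walk (Sum.inl u) (Sum.inl w)
  | _, _, .nil => .nil
  | _, _, .cons h p =>
    .cons (adj_inl_subdiv h) (.cons (adj_subdiv_subdiv h) (.cons (adj_inl_subdiv h.symm).symm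
      (liftWalk p)))

lemma length_liftWalk {u w : V} (p : T.Walk u w) :
    (liftWalk (s := s) p).length = 3 * p.length := by
  induction p with
  | nil => rfl
  | cons h p ih => simp only [liftWalk, Walk.length_cons, ih]; ring

lemma connected (hT : T.Connected) : (vicsekGraph s T).Connected := by
  have reach_inl : ∀ x : VicsekVert s T, ∃ v, (vicsekGraph s T).Reachable x (Sum.inl v) := by
    rintro (v | ⟨⟨⟨a, b⟩, h⟩ | ⟨v, i⟩⟩)
    · exact ⟨v, .rfl⟩
    · exact ⟨a, (adj_inl_subdiv h).reachable.symm⟩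
    · exact ⟨v, (adj_inl_leaf v i).reachable.symm⟩
  have : Nonempty (VicsekVert s T) := ⟨Sum.inl hT.nonempty.some⟩
  refine .mk fun x y => ?_
  obtain ⟨u, hu⟩ := reach_inl x
  obtain ⟨w, hw⟩ := reach_inl y
  exact hu.trans ((liftWalk (hT.preconnected u w).some).reachable.trans hw.symm)

lemma degree_inl {v : V} (hv : T.degree v ≤ s) : (vicsekGraph s T).degree (Sum.inl v) = s := by
  let f : T.neighborSet v ⊕ Fin (s - T.degree v) → (vicsekGraph s T).neighborSet (Sum.inl v) :=
    Sum.elim (fun b => ⟨subdiv b.2, adj_inl_subdiv b.2⟩)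
      (fun i => ⟨leaf v i, adj_inl_leaf v i⟩)
  have hf : Function.Bijective f := by
    constructor
    · rintro (⟨b, _⟩ | i) (⟨b', _⟩ | i') h <;>
        simp_all [f, subdiv, leaf, Subtype.ext_iff]
    · rintro ⟨y, hy⟩
      rcases adj_inl_iff.1 hy with ⟨b, h, rfl⟩ | ⟨i, rfl⟩
      exacts [⟨.inl ⟨b, h⟩, rfl⟩, ⟨.inr i, rfl⟩]
  rw [← card_neighborSet_eq_degree, ← Fintype.card_of_bijective hf, Fintype.card_sum,
    card_neighborSet_eq_degree, Fintype.card_fin]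
  omega

lemma degree_subdiv (p : {p : V × V // T.Adj p.1 p.2}) :
    (vicsekGraph s T).degree (Sum.inr (Sum.inl p)) = 2 := by
  obtain ⟨⟨a, b⟩, h⟩ := p
  have : (vicsekGraph s T).neighborFinset (subdiv h) = {Sum.inl a, subdiv h.symm} := by
    ext y
    simp [adj_subdiv_iff]
  rw [← card_neighborFinset_eq_degree]
  exact this ▸ card_pair (by simp [subdiv])

lemma degree_leaf (q : (v : V) × Fin (s - T.degree v)) :
    (vicsekGraph s T).degree (Sum.inr (Sum.inr q)) = 1 := by
  obtain ⟨v, i⟩ := q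
  have : (vicsekGraph s T).neighborFinset (leaf v i) = {Sum.inl v} := by
    ext y
    simp [adj_leaf_iff]
  rw [← card_neighborFinset_eq_degree]
  exact this ▸ card_singleton _

lemma card_edgeFinset_add_one (hT : T.IsTree) (hdeg : ∀ v, T.degree v ≤ s) :
    #(vicsekGraph s T).edgeFinset + 1 = Fintype.card (VicsekVert s T) := by
  have hsum := (vicsekGraph s T).sum_degrees_eq_twice_card_edges
  simp only [Fintype.sum_sum_type, degree_inl (hdeg _), degree_subdiv, degree_leaf,
    Finset.sum_const, Finset.card_univ, smul_eq_mul] at hsum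
  have hleaves : Fintype.card ((v : V) × Fin (s - T.degree v)) + 2 * #T.edgeFinset
      = Fintype.card V * s := by
    rw [Fintype.card_sigma, ← T.sum_degrees_eq_twice_card_edges, ← Finset.sum_add_distrib]
    simp [Nat.sub_add_cancel (hdeg _)]
  have htree := hT.card_edgeFinset
  rw [Fintype.card_sum, Fintype.card_sum, T.card_subtype_adj] at *
  omega

lemma isTree (hT : T.IsTree) (hdeg : ∀ v, T.degree v ≤ s) : (vicsekGraph s T).IsTree := by
  refine isTree_iff_connected_and_card.2 ⟨connected hT.connected, ?_⟩
  rw [Nat.card_eq_fintype_card, Nat.card_eq_fintype_card, ← edgeFinset_card]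
  exact card_edgeFinset_add_one hT hdeg

/-- A potential that grows by at most one along each edge bounds the distance to its zero from
below; this one is `3 d_T(·, w)` on the original vertices. -/
noncomputable def liftedDist (w : V) : VicsekVert s T → ℕ
  | .inl v => 3 * T.dist v w
  | .inr (.inl p) => min (3 * T.dist p.1.1 w + 1) (3 * T.dist p.1.2 w + 2)
  | .inr (.inr q) => 3 * T.dist q.1 w + 1

lemma liftedDist_le_add_one (w : V) {x y : VicsekVert s T} (h : (vicsekGraph s T).Adj x y) :
    liftedDist w x ≤ liftedDist w y + 1 := by
  rcases x with v | ⟨⟨⟨a, b⟩, hab⟩ | ⟨v, i⟩⟩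
  · rcases adj_inl_iff.1 h with ⟨b, hvb, rfl⟩ | ⟨i, rfl⟩
    · have := hvb.diff_dist_adj (u := w)
      simp only [liftedDist, subdiv, dist_comm (u := w)] at this ⊢
      omega
    · simp only [liftedDist, leaf]; omega
  · have := hab.diff_dist_adj (u := w)
    rcases adj_subdiv_iff.1 h with rfl | rfl <;>
      simp only [liftedDist, subdiv, dist_comm (u := w)] at this ⊢ <;> omega
  · rcases adj_leaf_iff.1 h with rfl
    simp [liftedDist]

lemma dist_inl_inl (hT : T.Connected) (u w : V) :
    (vicsekGraph s T).dist (Sum.inl u) (Sum.inl w) = 3 * T.dist u w := by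
  refine le_antisymm ?_ ?_
  · obtain ⟨p, hp⟩ := hT.exists_walk_length_eq_dist u w
    simpa [length_liftWalk, hp] using dist_le (liftWalk (s := s) p)
  · have := ((connected (s := s) hT).preconnected (Sum.inl u) (Sum.inl w)).le_dist_add_of_adj_le
      (liftedDist w) (fun _ _ h => liftedDist_le_add_one w h)
    simpa [liftedDist] using this

end vicsekGraph

/-- For distinct original vertices `u, w` of `T`, the sum over all
neighbors `x` of `u` and all neighbors `y` of `w` in `V_s(T)` of the distance between
`x` and `y` in `V_s(T)` equals `3·s²·d_T(u,w) + 2·s·(s-2)`. -/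
theorem vicsekGraph_sum_dist_neighbors_pairs {V : Type} [Fintype V] [DecidableEq V]
    (s : ℕ) (hs : 2 ≤ s) (T : SimpleGraph V) [DecidableRel T.Adj]
    (hT : T.IsTree) (hdeg : ∀ v : V, T.degree v ≤ s) :
    ∀ u w : V, u ≠ w →
      (∑ x ∈ (vicsekGraph s T).neighborFinset (Sum.inl u),
        ∑ y ∈ (vicsekGraph s T).neighborFinset (Sum.inl w),
          (vicsekGraph s T).dist x y) = 3 * s ^ 2 * T.dist u w + 2 * s * (s - 2) := by
  intro u w huw
  have key := (vicsekGraph.isTree hT hdeg).sum_sum_dist_neighborFinset_add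
    (Sum.inl_injective.ne huw) (vicsekGraph.not_adj_inl_inl u w)
  rw [vicsekGraph.degree_inl (hdeg u), vicsekGraph.degree_inl (hdeg w),
    vicsekGraph.dist_inl_inl hT.connected] at key
  obtain ⟨k, rfl⟩ : ∃ k, s = k + 2 := ⟨s - 2, by omega⟩
  rw [Nat.add_sub_cancel]
  linear_combination key
end

section
/- (Scaling relation) Let s ≥ 2 be an integer and let T be a finite tree with n ≥ 2 vertices in which every vertex has degree at most s. For t ≥ 1 set A_t = 2·W(V_s^t(T))/(n(s+1)^t) and N_t = n(s+1)^t. Then the ratio log(A_t)/log(N_t) converges, as t → ∞, to λ = 1 + log 3 / log(s+1). In particular the limiting exponent λ does not depend on the choice of the seed tree T. -/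
open SimpleGraph Finset

/-!
Every vertex of `V_s(G)` is within distance `1` of an original vertex, and original vertices
are exactly three times as far apart as in `G` (the upper bound by tracing walks through the
subdivided edges, the lower bound by a potential that changes by at most `1` along each edge).
Hence `|d_{V_s(G)}(x, y) - 3 d_G(πx, πy)| ≤ 2` for the projection `π` onto `G`, whose fibres
all have `s + 1` points. Iterating from `X = V_s(T)`, distances in `V_s^t(X)` lie between
`3^t (d_X - 1)` and `3^t (d_X + 1)` over fibres of size `(s + 1)^t`, so
`2 W(V_s^{t+1}(T))` is within constant factors of `(3 (s + 1)^2)^t` while `N_{t+1}` is a constant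
times `(s + 1)^t`. Taking logarithms, `log A_t / log N_t → log (3 (s + 1)) / log (s + 1)`.
-/

open Filter Real Topology

lemma two_mul_wienerIndex {W : Type} [Fintype W] (G : SimpleGraph W) :
    2 * wienerIndex G = ∑ u, ∑ v, G.dist u v := by
  refine Nat.mul_div_cancel' ?_
  rw [← ZMod.natCast_eq_zero_iff]
  push_cast
  rw [← sum_product']
  refine sum_ninvolution Prod.swap (fun p => ?_) (fun p hp hswap => hp ?_) (by simp) (by simp)
  · rw [Prod.fst_swap, Prod.snd_swap, dist_comm, CharTwo.add_self_eq_zero]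
  · rw [← Prod.snd_swap (p := p), hswap, dist_self, Nat.cast_zero]

lemma sum_sum_dist_sub_one_pos {W : Type} [Fintype W] {G : SimpleGraph W} (hc : G.Connected)
    {u v : W} (hne : u ≠ v) (hnadj : ¬ G.Adj u v) : 0 < ∑ a, ∑ b, (G.dist a b - 1) := by
  have := hc.one_lt_dist_of_ne_of_not_adj hne hnadj
  calc 0 < G.dist u v - 1 := by omega
    _ ≤ ∑ b, (G.dist u b - 1) :=
        single_le_sum (f := fun b => G.dist u b - 1) (fun b _ => Nat.zero_le _) (mem_univ v)
    _ ≤ ∑ a, ∑ b, (G.dist a b - 1) :=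
        single_le_sum (f := fun a => ∑ b, (G.dist a b - 1)) (fun a _ => Nat.zero_le _)
          (mem_univ u)

section VicsekStep

variable {V : Type} [Fintype V] {s : ℕ} {G : SimpleGraph V} [DecidableRel G.Adj]

def VicsekVert.proj : VicsekVert s G → V
  | .inl u => u
  | .inr (.inl p) => p.1.1
  | .inr (.inr q) => q.1

lemma VicsekVert.sum_comp_proj (hdeg : ∀ v, G.degree v ≤ s) (g : V → ℕ) :
    ∑ x : VicsekVert s G, g x.proj = (s + 1) * ∑ v, g v := by
  have hsubdiv : ∑ p : {p : V × V // G.Adj p.1 p.2}, g p.1.1 = ∑ v, G.degree v * g v := by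
    rw [← sum_subtype (univ.filter fun p : V × V => G.Adj p.1 p.2) (by simp) (fun p => g p.1),
      sum_filter, Fintype.sum_prod_type]
    refine sum_congr rfl fun u _ => ?_
    rw [← sum_filter]
    dsimp only
    rw [sum_const, ← neighborFinset_eq_filter, card_neighborFinset_eq_degree, smul_eq_mul]
  have hleaf : ∑ q : (v : V) × Fin (s - G.degree v), g q.1 = ∑ v, (s - G.degree v) * g v := by
    simp [Fintype.sum_sigma]
  simp only [Fintype.sum_sum_type, VicsekVert.proj, hsubdiv, hleaf, ← sum_add_distrib, mul_sum]
  refine sum_congr rfl fun v _ => ?_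
  have : G.degree v + (s - G.degree v) = s := by have := hdeg v; omega
  rw [← add_mul, this]
  ring

variable [DecidableEq V]

lemma vicsekGraph_eq_or_adj_proj (x : VicsekVert s G) :
    x = .inl x.proj ∨ (vicsekGraph s G).Adj (.inl x.proj) x := by
  rcases x with u | ⟨⟨a, c⟩, hac⟩ | ⟨w, i⟩ <;>
    simp [VicsekVert.proj, vicsekGraph, vicsekRel]

lemma vicsekGraph_dist_inl_proj_le_one (x : VicsekVert s G) :
    (vicsekGraph s G).dist (.inl x.proj) x ≤ 1 := by
  rcases vicsekGraph_eq_or_adj_proj x with h | h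
  · rw [← h, dist_self]; exact zero_le_one
  · exact (dist_eq_one_iff_adj.2 h).le

lemma vicsekGraph_adj_inl_subdiv {a b : V} (h : G.Adj a b) :
    (vicsekGraph s G).Adj (.inl a) (.inr (.inl ⟨(a, b), h⟩)) := by
  simp [vicsekGraph, vicsekRel]

lemma vicsekGraph_adj_subdiv_subdiv {a b : V} (h : G.Adj a b) :
    (vicsekGraph s G).Adj (.inr (.inl ⟨(a, b), h⟩)) (.inr (.inl ⟨(b, a), h.symm⟩)) := by
  simp [vicsekGraph, vicsekRel, h.ne]

def vicsekLift : ∀ {a b : V}, G.Walk a b → (vicsekGraph s G).Walk (.inl a) (.inl b)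
  | _, _, .nil => .nil
  | _, _, .cons h p =>
      .cons (vicsekGraph_adj_inl_subdiv h) <| .cons (vicsekGraph_adj_subdiv_subdiv h) <|
        .cons (vicsekGraph_adj_inl_subdiv h.symm).symm (vicsekLift p)

lemma vicsekLift_length {a b : V} (p : G.Walk a b) :
    (vicsekLift (s := s) p).length = 3 * p.length := by
  induction p with
  | nil => rfl
  | cons h q ih => simp only [vicsekLift, Walk.length_cons, ih]; ring

lemma vicsekGraph_connected (hc : G.Connected) : (vicsekGraph s G).Connected := by
  have hreach (x : VicsekVert s G) : (vicsekGraph s G).Reachable (.inl x.proj) x := by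
    rcases vicsekGraph_eq_or_adj_proj x with h | h
    · rw [← h]
    · exact h.reachable
  have : Nonempty V := hc.nonempty
  refine (connected_iff _).2 ⟨fun x y => ?_, inferInstance⟩
  obtain ⟨p⟩ := hc x.proj y.proj
  exact ((hreach x).symm.trans ⟨vicsekLift p⟩).trans (hreach y)

/-- Three times the `G`-distance to `b`, read along subdivided edges: the subdivision vertex
`(u, v)` lies at distance `1` from `u` and `2` from `v`. -/
noncomputable def vicsekPot (b : V) : VicsekVert s G → ℕ
  | .inl u => 3 * G.dist b u
  | .inr (.inl p) => min (3 * G.dist b p.1.1 + 1) (3 * G.dist b p.1.2 + 2)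
  | .inr (.inr q) => 3 * G.dist b q.1 + 1

lemma vicsekPot_le_of_adj (b : V) {x y : VicsekVert s G} (h : (vicsekGraph s G).Adj x y) :
    vicsekPot b x ≤ vicsekPot b y + 1 := by
  rcases x with u | ⟨⟨a, c⟩, hac⟩ | ⟨w, i⟩ <;>
    rcases y with u' | ⟨⟨a', c'⟩, hac'⟩ | ⟨w', i'⟩ <;>
    simp [vicsekGraph, vicsekRel] at h
  · subst h
    have := hac'.diff_dist_adj (u := b)
    simp only [vicsekPot] at *
    omega
  · subst h
    simp only [vicsekPot] at *
    omega
  · subst h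
    have := hac.diff_dist_adj (u := b)
    simp only [vicsekPot] at *
    omega
  · obtain ⟨rfl, rfl⟩ : a' = c ∧ c' = a := by tauto
    have := hac.diff_dist_adj (u := b)
    simp only [vicsekPot] at *
    omega
  · subst h
    simp only [vicsekPot] at *
    omega

lemma vicsekPot_le_length_add (b : V) {x y : VicsekVert s G} (p : (vicsekGraph s G).Walk x y) :
    vicsekPot b x ≤ p.length + vicsekPot b y := by
  induction p with
  | nil => simp
  | cons h q ih =>
      have := vicsekPot_le_of_adj b h
      rw [Walk.length_cons]
      omega

lemma vicsekGraph_dist_inl_s13 (hc : G.Connected) (a b : V) :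
    (vicsekGraph s G).dist (.inl a) (.inl b) = 3 * G.dist a b := by
  apply le_antisymm
  · obtain ⟨p, hp⟩ := hc.exists_walk_length_eq_dist a b
    calc (vicsekGraph s G).dist (.inl a) (.inl b) ≤ (vicsekLift p).length := dist_le _
      _ = 3 * G.dist a b := by rw [vicsekLift_length, hp]
  · obtain ⟨p, hp⟩ := (vicsekGraph_connected (s := s) hc).exists_walk_length_eq_dist
      (.inl a) (.inl b)
    simpa [vicsekPot, hp, dist_comm] using vicsekPot_le_length_add b p

lemma vicsekGraph_dist_le (hc : G.Connected) (x y : VicsekVert s G) :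
    (vicsekGraph s G).dist x y ≤ 3 * G.dist x.proj y.proj + 2 := by
  have hH := vicsekGraph_connected (s := s) hc
  have hx := vicsekGraph_dist_inl_proj_le_one x
  have hy := vicsekGraph_dist_inl_proj_le_one y
  rw [dist_comm] at hx
  have := hH.dist_triangle (u := x) (v := .inl x.proj) (w := y)
  have := hH.dist_triangle (u := .inl x.proj) (v := .inl y.proj) (w := y)
  rw [vicsekGraph_dist_inl_s13 hc] at this
  omega

lemma vicsekGraph_dist_ge (hc : G.Connected) (x y : VicsekVert s G) :
    3 * G.dist x.proj y.proj ≤ (vicsekGraph s G).dist x y + 2 := by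
  have hH := vicsekGraph_connected (s := s) hc
  have hx := vicsekGraph_dist_inl_proj_le_one x
  have hy := vicsekGraph_dist_inl_proj_le_one y
  rw [dist_comm] at hy
  have := hH.dist_triangle (u := x) (v := y) (w := .inl y.proj)
  have := hH.dist_triangle (u := .inl x.proj) (v := x) (w := .inl y.proj)
  rw [vicsekGraph_dist_inl_s13 hc] at this
  omega

lemma vicsekGraph_degree_le (hs : 2 ≤ s) (hdeg : ∀ v, G.degree v ≤ s) (x : VicsekVert s G) :
    (vicsekGraph s G).degree x ≤ s := by
  rw [← card_neighborFinset_eq_degree]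
  rcases x with u | ⟨⟨a, c⟩, hac⟩ | ⟨w, i⟩
  · have hfiber : #{y : VicsekVert s G | y.proj = u} = s + 1 := by
      rw [card_filter, VicsekVert.sum_comp_proj hdeg (fun v => if v = u then 1 else 0),
        sum_ite_eq', if_pos (mem_univ _), mul_one]
    calc #((vicsekGraph s G).neighborFinset (.inl u))
        ≤ #(({y : VicsekVert s G | y.proj = u} : Finset _).erase (.inl u)) := by
          refine card_le_card fun y hy => ?_
          rw [mem_neighborFinset] at hy
          rw [mem_erase, mem_filter]
          rcases y with u' | ⟨⟨a', c'⟩, hac'⟩ | ⟨w', i'⟩ <;>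
            simp [vicsekGraph, vicsekRel, VicsekVert.proj] at hy ⊢ <;> tauto
      _ = s := by
          rw [card_erase_of_mem, hfiber, Nat.add_sub_cancel]
          exact mem_filter.2 ⟨mem_univ _, rfl⟩
  · calc #((vicsekGraph s G).neighborFinset _)
        ≤ #({.inl a, .inr (.inl ⟨(c, a), hac.symm⟩)} : Finset (VicsekVert s G)) := by
          refine card_le_card fun y hy => ?_
          rw [mem_neighborFinset] at hy
          rcases y with u' | ⟨⟨a', c'⟩, hac'⟩ | ⟨w', i'⟩ <;>
            simp [vicsekGraph, vicsekRel] at hy ⊢ <;> tauto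
      _ ≤ 2 := card_le_two
      _ ≤ s := hs
  · calc #((vicsekGraph s G).neighborFinset _) ≤ #({.inl w} : Finset (VicsekVert s G)) := by
          refine card_le_card fun y hy => ?_
          rw [mem_neighborFinset] at hy
          rcases y with u' | ⟨⟨a', c'⟩, hac'⟩ | ⟨w', i'⟩ <;>
            simp [vicsekGraph, vicsekRel] at hy ⊢
          exact hy
      _ ≤ s := by rw [card_singleton]; omega

end VicsekStep

section VicsekIter

variable {s : ℕ}

lemma vicsekIter_succ' (t : ℕ) (X : FinSimpleGraph) :
    vicsekIter s (t + 1) X = vicsekIter s t (vicsekStep s X) := by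
  induction t with
  | zero => rfl
  | succ t ih => exact congrArg (vicsekStep s) ih

lemma vicsekIter_connected {X : FinSimpleGraph} (hc : X.G.Connected) :
    ∀ t, (vicsekIter s t X).G.Connected
  | 0 => hc
  | t + 1 => vicsekGraph_connected (vicsekIter_connected hc t)

lemma vicsekIter_degree_le (hs : 2 ≤ s) {X : FinSimpleGraph} (hdeg : ∀ v, X.G.degree v ≤ s) :
    ∀ t v, (vicsekIter s t X).G.degree v ≤ s
  | 0 => hdeg
  | t + 1 => vicsekGraph_degree_le hs (vicsekIter_degree_le hs hdeg t)

def vicsekIterProj (s : ℕ) : ∀ t (X : FinSimpleGraph), (vicsekIter s t X).V → X.V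
  | 0, _, x => x
  | t + 1, X, x => vicsekIterProj s t X (VicsekVert.proj (s := s) (G := (vicsekIter s t X).G) x)

variable {X : FinSimpleGraph}

lemma sum_comp_vicsekIterProj (hs : 2 ≤ s) (hdeg : ∀ v, X.G.degree v ≤ s) (g : X.V → ℕ)
    (t : ℕ) :
    ∑ x, g (vicsekIterProj s t X x) = (s + 1) ^ t * ∑ v, g v := by
  induction t with
  | zero => rw [pow_zero, one_mul]; rfl
  | succ t ih =>
      rw [pow_succ', mul_assoc, ← ih]
      exact VicsekVert.sum_comp_proj (vicsekIter_degree_le hs hdeg t)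
        (fun y => g (vicsekIterProj s t X y))

lemma sum_sum_comp_vicsekIterProj (hs : 2 ≤ s) (hdeg : ∀ v, X.G.degree v ≤ s)
    (F : X.V → X.V → ℕ) (t : ℕ) :
    ∑ x, ∑ y, F (vicsekIterProj s t X x) (vicsekIterProj s t X y)
      = (s + 1) ^ (2 * t) * ∑ a, ∑ b, F a b := by
  simp only [sum_comp_vicsekIterProj hs hdeg (F _), ← mul_sum,
    sum_comp_vicsekIterProj hs hdeg (fun a => ∑ b, F a b)]
  ring

lemma vicsekIter_dist_lower (hc : X.G.Connected) (t : ℕ) (x y : (vicsekIter s t X).V) :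
    3 ^ t * X.G.dist (vicsekIterProj s t X x) (vicsekIterProj s t X y) + 1
      ≤ (vicsekIter s t X).G.dist x y + 3 ^ t := by
  induction t with
  | zero => simp only [pow_zero, one_mul]; exact le_rfl
  | succ t ih =>
      have hstep : 3 * (vicsekIter s t X).G.dist x.proj y.proj
          ≤ (vicsekIter s (t + 1) X).G.dist x y + 2 :=
        vicsekGraph_dist_ge (vicsekIter_connected hc t) x y
      have := ih x.proj y.proj
      dsimp only [vicsekIterProj]
      rw [pow_succ]
      linarith

lemma vicsekIter_dist_upper (hc : X.G.Connected) (t : ℕ) (x y : (vicsekIter s t X).V) :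
    (vicsekIter s t X).G.dist x y + 1
      ≤ 3 ^ t * (X.G.dist (vicsekIterProj s t X x) (vicsekIterProj s t X y) + 1) := by
  induction t with
  | zero => simp only [pow_zero, one_mul]; exact le_rfl
  | succ t ih =>
      have hstep : (vicsekIter s (t + 1) X).G.dist x y
          ≤ 3 * (vicsekIter s t X).G.dist x.proj y.proj + 2 :=
        vicsekGraph_dist_le (vicsekIter_connected hc t) x y
      have := ih x.proj y.proj
      dsimp only [vicsekIterProj]
      rw [pow_succ]
      linarith

lemma sum_sum_dist_vicsekIter_le (hs : 2 ≤ s) (hdeg : ∀ v, X.G.degree v ≤ s)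
    (hc : X.G.Connected) (t : ℕ) :
    ∑ x, ∑ y, (vicsekIter s t X).G.dist x y
      ≤ (3 * (s + 1) ^ 2) ^ t * ∑ a, ∑ b, (X.G.dist a b + 1) := by
  calc ∑ x, ∑ y, (vicsekIter s t X).G.dist x y
      ≤ ∑ x, ∑ y, 3 ^ t * (X.G.dist (vicsekIterProj s t X x) (vicsekIterProj s t X y) + 1) :=
        sum_le_sum fun x _ => sum_le_sum fun y _ =>
          (Nat.le_succ _).trans (vicsekIter_dist_upper hc t x y)
    _ = (3 * (s + 1) ^ 2) ^ t * ∑ a, ∑ b, (X.G.dist a b + 1) := by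
        rw [sum_sum_comp_vicsekIterProj hs hdeg (fun a b => 3 ^ t * (X.G.dist a b + 1))]
        simp only [← mul_sum]
        rw [mul_pow, ← pow_mul]
        ring

lemma le_sum_sum_dist_vicsekIter (hs : 2 ≤ s) (hdeg : ∀ v, X.G.degree v ≤ s)
    (hc : X.G.Connected) (t : ℕ) :
    (3 * (s + 1) ^ 2) ^ t * ∑ a, ∑ b, (X.G.dist a b - 1)
      ≤ ∑ x, ∑ y, (vicsekIter s t X).G.dist x y := by
  calc (3 * (s + 1) ^ 2) ^ t * ∑ a, ∑ b, (X.G.dist a b - 1)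
      = ∑ x, ∑ y, 3 ^ t * (X.G.dist (vicsekIterProj s t X x) (vicsekIterProj s t X y) - 1) := by
        rw [sum_sum_comp_vicsekIterProj hs hdeg (fun a b => 3 ^ t * (X.G.dist a b - 1))]
        simp only [← mul_sum]
        rw [mul_pow, ← pow_mul]
        ring
    _ ≤ ∑ x, ∑ y, (vicsekIter s t X).G.dist x y :=
        sum_le_sum fun x _ => sum_le_sum fun y _ => by
          have := vicsekIter_dist_lower hc t x y
          rw [Nat.mul_sub_one]
          omega

lemma two_mul_wienerIndex_vicsekIter_bounds (hs : 2 ≤ s) (hdeg : ∀ v, X.G.degree v ≤ s)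
    (hc : X.G.Connected) (t : ℕ) :
    ((∑ a, ∑ b, (X.G.dist a b - 1) : ℕ) : ℝ) * (3 * ((s : ℝ) + 1) ^ 2) ^ t
        ≤ 2 * (wienerIndex (vicsekIter s t X).G : ℝ) ∧
      2 * (wienerIndex (vicsekIter s t X).G : ℝ)
        ≤ ((∑ a, ∑ b, (X.G.dist a b + 1) : ℕ) : ℝ) * (3 * ((s : ℝ) + 1) ^ 2) ^ t := by
  have h2W : 2 * (wienerIndex (vicsekIter s t X).G : ℝ)
      = ((∑ x, ∑ y, (vicsekIter s t X).G.dist x y : ℕ) : ℝ) := by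
    exact_mod_cast two_mul_wienerIndex _
  rw [h2W, mul_comm, mul_comm _ ((3 * ((s : ℝ) + 1) ^ 2) ^ t)]
  exact ⟨by exact_mod_cast le_sum_sum_dist_vicsekIter hs hdeg hc t,
    by exact_mod_cast sum_sum_dist_vicsekIter_le hs hdeg hc t⟩

end VicsekIter

lemma tendsto_div_natCast_of_bounds {u : ℕ → ℝ} {α a b : ℝ}
    (h : ∀ t : ℕ, a + t * α ≤ u t ∧ u t ≤ b + t * α) :
    Tendsto (fun t : ℕ => u t / t) atTop (𝓝 α) := by
  have key (c : ℝ) : Tendsto (fun t : ℕ => (c + t * α) / t) atTop (𝓝 α) := by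
    have := (tendsto_const_div_atTop_nhds_zero_nat c).add_const α
    rw [zero_add] at this
    refine this.congr' ?_
    filter_upwards [eventually_ne_atTop 0] with t ht
    field_simp
  exact tendsto_of_tendsto_of_tendsto_of_le_of_le (key a) (key b)
    (fun t => div_le_div_of_nonneg_right (h t).1 t.cast_nonneg)
    (fun t => div_le_div_of_nonneg_right (h t).2 t.cast_nonneg)

lemma tendsto_log_div_natCast_of_bounds {f : ℕ → ℝ} {ρ c C : ℝ} (hc : 0 < c) (hρ : 0 < ρ)
    (hf : ∀ t, c * ρ ^ t ≤ f t ∧ f t ≤ C * ρ ^ t) :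
    Tendsto (fun t : ℕ => log (f t) / t) atTop (𝓝 (log ρ)) := by
  have hC : 0 < C := by
    have h0 := (hf 0).1.trans (hf 0).2
    rw [pow_zero, mul_one, mul_one] at h0
    exact hc.trans_le h0
  have hlog {k : ℝ} (hk : 0 < k) (t : ℕ) : log (k * ρ ^ t) = log k + t * log ρ := by
    rw [log_mul hk.ne' (pow_pos hρ t).ne', log_pow]
  refine tendsto_div_natCast_of_bounds (a := log c) (b := log C) fun t => ?_
  have hpos : 0 < c * ρ ^ t := by positivity
  rw [← hlog hc, ← hlog hC]
  exact ⟨log_le_log hpos (hf t).1, log_le_log (hpos.trans_le (hf t).1) (hf t).2⟩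

lemma tendsto_log_div_div_log_of_bounds {f g : ℕ → ℝ} {ρ σ c C d D : ℝ} (hc : 0 < c)
    (hd : 0 < d) (hρ : 0 < ρ) (hσ : 1 < σ) (hf : ∀ t, c * ρ ^ t ≤ f t ∧ f t ≤ C * ρ ^ t)
    (hg : ∀ t, d * σ ^ t ≤ g t ∧ g t ≤ D * σ ^ t) :
    Tendsto (fun t : ℕ => log (f t / g t) / log (g t)) atTop
      (𝓝 ((log ρ - log σ) / log σ)) := by
  have hF := tendsto_log_div_natCast_of_bounds hc hρ hf
  have hG := tendsto_log_div_natCast_of_bounds hd (zero_lt_one.trans hσ) hg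
  refine ((hF.sub hG).div hG (log_pos hσ).ne').congr' ?_
  filter_upwards [eventually_ne_atTop 0] with t ht
  have hft : 0 < f t := (by positivity : 0 < c * ρ ^ t).trans_le (hf t).1
  have hgt : 0 < g t :=
    (mul_pos hd (pow_pos (zero_lt_one.trans hσ) t)).trans_le (hg t).1
  simp only [Pi.div_apply]
  rw [log_div hft.ne' hgt.ne', ← sub_div,
    div_div_div_cancel_right₀ (Nat.cast_ne_zero.2 ht)]

/-- scaling relation. For a tree `T` with `n ≥ 2` vertices, all of
degree at most `s ≥ 2`, setting `A_t = 2·W(V_s^t(T))/(n(s+1)^t)` and `N_t = n(s+1)^t`,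
the ratio `log A_t / log N_t` converges as `t → ∞` to `λ = 1 + log 3 / log (s+1)`;
in particular the limit does not depend on the seed tree `T`. -/
theorem vicsekIter_scaling_exponent {V : Type} [Fintype V] [DecidableEq V]
    (s n : ℕ) (hs : 2 ≤ s) (T : SimpleGraph V) [DecidableRel T.Adj]
    (hT : T.IsTree) (hn : Fintype.card V = n) (hn2 : 2 ≤ n)
    (hdeg : ∀ v : V, T.degree v ≤ s) :
    Filter.Tendsto
      (fun t : ℕ =>
        Real.log (2 * (wienerIndex (vicsekIter s t { V := V, G := T }).G : ℝ)
            / ((n : ℝ) * ((s : ℝ) + 1) ^ t))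
          / Real.log ((n : ℝ) * ((s : ℝ) + 1) ^ t))
      Filter.atTop
      (nhds (1 + Real.log 3 / Real.log ((s : ℝ) + 1))) := by
  -- `T` itself may have no two vertices at distance `2` (when `n = 2`), so iterate from `V_s(T)`.
  set X : FinSimpleGraph := vicsekStep s { V := V, G := T }
  have hc : X.G.Connected := vicsekGraph_connected hT.connected
  have hdegX : ∀ v, X.G.degree v ≤ s := vicsekGraph_degree_le hs hdeg
  obtain ⟨a, b, hab⟩ := Fintype.one_lt_card_iff.1 (hn ▸ hn2 : 1 < Fintype.card V)
  have hspread : 0 < ∑ x, ∑ y, (X.G.dist x y - 1) :=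
    sum_sum_dist_sub_one_pos (u := .inl a) (v := .inl b) hc (Sum.inl_injective.ne hab)
      (by simp [X, vicsekStep, vicsekGraph, vicsekRel])
  have hlim : 1 + log 3 / log ((s : ℝ) + 1)
      = (log (3 * ((s : ℝ) + 1) ^ 2) - log ((s : ℝ) + 1)) / log ((s : ℝ) + 1) := by
    have : 0 < log ((s : ℝ) + 1) := log_pos (by norm_cast; omega)
    rw [log_mul (by norm_num) (by positivity), log_pow]
    field_simp
    ring
  rw [hlim, ← tendsto_add_atTop_iff_nat 1]
  have hN (t : ℕ) :
      (n * ((s : ℝ) + 1)) * ((s : ℝ) + 1) ^ t = n * ((s : ℝ) + 1) ^ (t + 1) := by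
    ring
  refine (tendsto_log_div_div_log_of_bounds (Nat.cast_pos.2 hspread) (by positivity)
    (by positivity) (by norm_cast; omega) (two_mul_wienerIndex_vicsekIter_bounds hs hdegX hc)
    (fun t => ⟨(hN t).le, (hN t).ge⟩)).congr fun t => ?_
  rw [vicsekIter_succ']
end
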